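/- Let G be a finite group and m > 1. If g ∈ G^m has weight at least 4, then e and g have no common neighbours in the graph G_m(G). -/
import Mathlib


namespace CayleyStmt6

variable {G : Type*}

def intvl [Group G] (m : ℕ) (x : G) (k l : ℕ) : Fin m → G :=
  fun i => if k ≤ i.1 + 1 ∧ i.1 + 1 < l then x else 1

def cS (G : Type*) [Group G] (m : ℕ) : Set (Fin m → G) :=
  {v | ∃ (x : G) (k l : ℕ), x ≠ 1 ∧ 1 ≤ k ∧ k < l ∧ l ≤ m + 1 ∧ v = intvl m x k l}

def cAdj [Group G] (m : ℕ) (g h : Fin m → G) : Prop := h * g⁻¹ ∈ cS G m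

def GoodDecomp [Group G] (m : ℕ) (g : Fin m → G)
    (d : Σ k : ℕ, (Fin (k + 1) → ℕ) × (Fin k → G)) : Prop :=
  0 < d.1 ∧
  StrictMono d.2.1 ∧
  1 ≤ d.2.1 0 ∧
  d.2.1 (Fin.last d.1) ≤ m + 1 ∧
  (∀ h : 0 < d.1, d.2.2 ⟨0, h⟩ ≠ 1) ∧
  (∀ h : 0 < d.1, d.2.2 ⟨d.1 - 1, by omega⟩ ≠ 1) ∧
  (∀ j : ℕ, ∀ h : j + 1 < d.1, d.2.2 ⟨j, by omega⟩ ≠ d.2.2 ⟨j + 1, h⟩) ∧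
  g = (List.ofFn fun j : Fin d.1 =>
        intvl m (d.2.2 j) (d.2.1 j.castSucc) (d.2.1 j.succ)).prod

theorem prod_ofFn_single {M : Type*} [Monoid M] :
    ∀ {n : ℕ} (f : Fin n → M) (j0 : Fin n), (∀ j, j ≠ j0 → f j = 1) →
      (List.ofFn f).prod = f j0 := by
  intro n
  induction n with
  | zero => intro f j0 _; exact j0.elim0
  | succ n ih =>
    intro f j0 h
    rw [List.ofFn_succ, List.prod_cons]
    rcases Fin.eq_zero_or_eq_succ j0 with h0 | ⟨j, rfl⟩
    · subst h0
      have h1 : (List.ofFn fun i : Fin n => f i.succ).prod = 1 := by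
        apply List.prod_eq_one
        intro a ha
        simp only [List.mem_ofFn, Set.mem_range] at ha
        obtain ⟨i, rfl⟩ := ha
        exact h i.succ (Fin.succ_ne_zero i)
      rw [h1, mul_one]
    · rw [h 0 (Ne.symm (Fin.succ_ne_zero j)), one_mul]
      exact ih _ j fun i hi => h i.succ (by simpa [Fin.succ_inj] using hi)

def Wfun [Group G] (x y : G) (k l p q : ℕ) : ℕ → G :=
  fun s => (if p ≤ s ∧ s < q then y else 1)⁻¹ * (if k ≤ s ∧ s < l then x else 1)

/-- If `g ∈ G^m` has weight at least `4`, then the identity and `g` have no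
common neighbours in `Cay(G^m, S)`. -/
theorem no_common_neighbours_of_weight_ge_four [Group G] [Fintype G]
    (m : ℕ) (hm : 1 < m) (g : Fin m → G)
    (d : Σ k : ℕ, (Fin (k + 1) → ℕ) × (Fin k → G))
    (hd : GoodDecomp m g d) (h4 : 4 ≤ d.1) :
    ∀ v : Fin m → G, ¬ (cAdj m (1 : Fin m → G) v ∧ cAdj m g v) := by
  obtain ⟨n, t, X⟩ := d
  rw [GoodDecomp] at hd
  dsimp only at hd h4
  obtain ⟨hn, hmono, ht0, htlast, hX0, hXlast, hadj, hprod⟩ := hd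
  rintro v ⟨h1, h2⟩
  rw [cAdj] at h1 h2
  simp only [inv_one, mul_one] at h1
  obtain ⟨x, k, l, hx, hk, hkl, hl, hv⟩ := h1
  obtain ⟨y, p, q, hy, hp, hpq, hq, hw⟩ := h2
  set W := Wfun x y k l p q with hW'
  -- pointwise description of g
  have hgW : ∀ i : Fin m, g i = W (i.1 + 1) := by
    intro i
    have h := congrFun hw i
    have hvi := congrFun hv i
    simp only [Pi.mul_apply, Pi.inv_apply] at h
    have hg : g i = (intvl m y p q i)⁻¹ * v i := by rw [← h]; group
    rw [hg, hvi]
    rfl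
  have hW0 : W 0 = 1 := by
    rw [hW', Wfun, if_neg (by omega), if_neg (by omega)]; simp
  have hWm : W (m + 1) = 1 := by
    rw [hW', Wfun, if_neg (by omega), if_neg (by omega)]; simp
  have hWstep : ∀ s : ℕ, 1 ≤ s → s ≠ k → s ≠ l → s ≠ p → s ≠ q →
      W (s - 1) = W s := by
    intro s h1s hk' hl' hp' hq'
    have e1 : (p ≤ s - 1 ∧ s - 1 < q) ↔ (p ≤ s ∧ s < q) := by omega
    have e2 : (k ≤ s - 1 ∧ s - 1 < l) ↔ (k ≤ s ∧ s < l) := by omega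
    simp only [hW', Wfun, e1, e2]
  -- evaluation of g via the decomposition
  have hgj : ∀ i : Fin m, g i = (List.ofFn fun j : Fin n =>
      if t j.castSucc ≤ i.1 + 1 ∧ i.1 + 1 < t j.succ then X j else 1).prod := by
    intro i
    conv_lhs => rw [hprod]
    rw [Pi.list_prod_apply, List.map_ofFn]
    rfl
  have hval1 : ∀ i : Fin m,
      (∀ j : Fin n, ¬(t j.castSucc ≤ i.1 + 1 ∧ i.1 + 1 < t j.succ)) → g i = 1 := by
    intro i h
    rw [hgj i]
    apply List.prod_eq_one
    intro a ha
    simp only [List.mem_ofFn, Set.mem_range] at ha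
    obtain ⟨j, rfl⟩ := ha
    rw [if_neg (h j)]
  have hval2 : ∀ (i : Fin m) (j : Fin n),
      t j.castSucc ≤ i.1 + 1 → i.1 + 1 < t j.succ → g i = X j := by
    intro i j hj1 hj2
    rw [hgj i, prod_ofFn_single _ j ?_, if_pos ⟨hj1, hj2⟩]
    intro j' hj'
    rw [if_neg]
    rintro ⟨hA, hB⟩
    rcases Nat.lt_or_ge j'.1 j.1 with hlt | hge
    · have hle : t j'.succ ≤ t j.castSucc :=
        hmono.monotone (by rw [Fin.le_def]; simp only [Fin.val_succ, Fin.coe_castSucc]; omega)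
      omega
    · have hne : j'.1 ≠ j.1 := fun e => hj' (Fin.ext e)
      have hle : t j.succ ≤ t j'.castSucc :=
        hmono.monotone (by rw [Fin.le_def]; simp only [Fin.val_succ, Fin.coe_castSucc]; omega)
      omega
  have hlow : ∀ j : Fin (n + 1), t 0 ≤ t j := fun j => hmono.monotone (Fin.zero_le j)
  have hhigh : ∀ j : Fin (n + 1), t j ≤ t (Fin.last n) := fun j => hmono.monotone (Fin.le_last j)
  have hWg' : ∀ s : ℕ, 1 ≤ s → s ≤ m → ∀ hs : s - 1 < m, W s = g ⟨s - 1, hs⟩ := by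
    intro s h1 h2 hs
    rw [hgW ⟨s - 1, hs⟩]
    congr 1
    show s = s - 1 + 1
    omega
  have hBelow : ∀ s : ℕ, s < t 0 → W s = 1 := by
    intro s hs
    rcases Nat.eq_zero_or_pos s with rfl | h1
    · exact hW0
    · have h01 := hlow (Fin.last n)
      rw [hWg' s h1 (by omega) (by omega)]
      apply hval1
      intro j
      rintro ⟨hA, hB⟩
      have hA' : t j.castSucc ≤ s - 1 + 1 := hA
      have hl2 := hlow j.castSucc
      omega
  have hAbove : ∀ s : ℕ, t (Fin.last n) ≤ s → s ≤ m + 1 → W s = 1 := by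
    intro s hs hsm
    by_cases he : s = m + 1
    · rw [he]; exact hWm
    · have h1 : 1 ≤ s := le_trans (le_trans ht0 (hlow (Fin.last n))) hs
      rw [hWg' s h1 (by omega) (by omega)]
      apply hval1
      intro j
      rintro ⟨hA, hB⟩
      have hB' : s - 1 + 1 < t j.succ := hB
      have h2 := hhigh j.succ
      omega
  have hIn : ∀ (s : ℕ) (j : Fin n), t j.castSucc ≤ s → s < t j.succ → W s = X j := by
    intro s j hA hB
    have h1 : 1 ≤ s := le_trans (le_trans ht0 (hlow j.castSucc)) hA
    have h2 : s ≤ m := by have := hhigh j.succ; have := htlast; omega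
    rw [hWg' s h1 h2 (by omega)]
    refine hval2 _ j ?_ ?_
    · show t j.castSucc ≤ s - 1 + 1; omega
    · show s - 1 + 1 < t j.succ; omega
  -- every breakpoint is in {k, l, p, q}
  have hmem : ∀ j : Fin (n + 1), t j ∈ ({k, l, p, q} : Finset ℕ) := by
    intro j
    by_contra hmemc
    simp only [Finset.mem_insert, Finset.mem_singleton] at hmemc
    push_neg at hmemc
    obtain ⟨e1, e2, e3, e4⟩ := hmemc
    have h1s : 1 ≤ t j := le_trans ht0 (hlow j)
    have heq : W (t j - 1) = W (t j) := hWstep _ h1s e1 e2 e3 e4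
    by_cases hj0 : j.1 = 0
    · have hc : (⟨0, hn⟩ : Fin n).castSucc = j :=
        Fin.ext (by simp only [Fin.coe_castSucc]; omega)
      have hWs : W (t j) = X ⟨0, hn⟩ := by
        refine hIn (t j) ⟨0, hn⟩ (by rw [hc]) ?_
        exact hmono (by rw [Fin.lt_def]; simp only [Fin.val_succ]; omega)
      have ht0j : t 0 = t j := congrArg t (Fin.ext (by simp only [Fin.val_zero]; omega))
      have hWs1 : W (t j - 1) = 1 := hBelow (t j - 1) (by omega)
      exact hX0 hn (by rw [← hWs, ← heq, hWs1])
    by_cases hjn : j.1 = n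
    · have hjl : j = Fin.last n := Fin.ext (by simp only [Fin.val_last]; omega)
      have hjm : t j ≤ m + 1 := by have := hhigh j; omega
      have hWs : W (t j) = 1 := hAbove (t j) (le_of_eq (congrArg t hjl.symm)) hjm
      have hWs1 : W (t j - 1) = X ⟨n - 1, by omega⟩ := by
        refine hIn (t j - 1) ⟨n - 1, by omega⟩ ?_ ?_
        · have hlt : t (⟨n - 1, by omega⟩ : Fin n).castSucc < t j :=
            hmono (by rw [Fin.lt_def]; simp only [Fin.coe_castSucc]; omega)
          omega
        · have he : (⟨n - 1, by omega⟩ : Fin n).succ = j :=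
            Fin.ext (by simp only [Fin.val_succ]; omega)
          rw [he]; omega
      exact hXlast hn (by rw [← hWs1, heq, hWs])
    · have hj2 : j.1 < n := by have := j.2; omega
      have hWs : W (t j) = X ⟨j.1, hj2⟩ := by
        refine hIn (t j) ⟨j.1, hj2⟩ ?_ ?_
        · have hc : (⟨j.1, hj2⟩ : Fin n).castSucc = j :=
            Fin.ext (by simp only [Fin.coe_castSucc])
          rw [hc]
        · exact hmono (by rw [Fin.lt_def]; simp only [Fin.val_succ]; omega)
      have hWs1 : W (t j - 1) = X ⟨j.1 - 1, by omega⟩ := by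
        refine hIn (t j - 1) ⟨j.1 - 1, by omega⟩ ?_ ?_
        · have hlt : t (⟨j.1 - 1, by omega⟩ : Fin n).castSucc < t j :=
            hmono (by rw [Fin.lt_def]; simp only [Fin.coe_castSucc]; omega)
          omega
        · have he : (⟨j.1 - 1, by omega⟩ : Fin n).succ = j :=
            Fin.ext (by simp only [Fin.val_succ]; omega)
          rw [he]; omega
      have hXX : X ⟨j.1 - 1, by omega⟩ = X ⟨j.1, hj2⟩ := by rw [← hWs1, heq, hWs]
      exact hadj (j.1 - 1) (by omega)
        (hXX.trans (congrArg X (Fin.ext (show j.1 = j.1 - 1 + 1 by omega))))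
  -- counting
  have hinj : Function.Injective t := hmono.injective
  have hcard : (Finset.univ : Finset (Fin (n + 1))).card ≤ ({k, l, p, q} : Finset ℕ).card :=
    Finset.card_le_card_of_injOn t (fun j _ => hmem j) (fun a _ b _ h => hinj h)
  have h5 : n + 1 ≤ ({k, l, p, q} : Finset ℕ).card := by simpa using hcard
  have a1 := Finset.card_insert_le k ({l, p, q} : Finset ℕ)
  have a2 := Finset.card_insert_le l ({p, q} : Finset ℕ)
  have a3 := Finset.card_insert_le p ({q} : Finset ℕ)
  have a4 : ({q} : Finset ℕ).card = 1 := Finset.card_singleton q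
  omega

end CayleyStmt6
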